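/- Each set U_A (for n ∈ ℕ and A a finite tree of height n without dead ends) is clopen in the hit-or-miss topology on C, and the family of all such sets U_A is a basis for the hit-or-miss topology on C. -/

import Mathlib

open Set MeasureTheory Topology Filter

/-- Cantor space `2^ℕ`. -/
abbrev Cantor : Type := ℕ → Bool

/-- The basic interval `I(σ)` of all extensions of the finite binary string `σ`. -/
def cyl (σ : List Bool) : Set Cantor :=
  {x | ∀ i : Fin σ.length, x i = σ.get i}

/-- The space `C` of nonempty closed subsets of Cantor space. -/
abbrev CC : Type := {K : Set Cantor // K.Nonempty ∧ IsClosed K}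

/-- The hit-or-miss topology on `C`, generated by the sets
`V(U) = {K : K ∩ U ≠ ∅}` and `W(U) = {K : K ⊆ U}` for `U` open. -/
instance (priority := 10000) hitMissTop : TopologicalSpace CC :=
  TopologicalSpace.generateFrom
    ({S | ∃ U : Set Cantor, IsOpen U ∧ S = {K : CC | (K.1 ∩ U).Nonempty}} ∪
     {S | ∃ U : Set Cantor, IsOpen U ∧ S = {K : CC | K.1 ⊆ U}})

/-- The Borel σ-algebra of the hit-or-miss topology. -/
instance (priority := 10000) hitMissMeasurable : MeasurableSpace CC := borel CC

/-- `A` is a finite tree of height `n` without dead ends. -/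
def FinTree (n : ℕ) (A : Finset (List Bool)) : Prop :=
  A.Nonempty ∧
  (∀ σ ∈ A, σ.length ≤ n) ∧
  (∀ σ τ : List Bool, σ <+: τ → τ ∈ A → σ ∈ A) ∧
  (∀ σ ∈ A, σ.length < n → σ ++ [false] ∈ A ∨ σ ++ [true] ∈ A)

/-- `U_A = {K ∈ C : T_K ∩ {0,1}^{≤ n} = A}`. -/
def UA (n : ℕ) (A : Finset (List Bool)) : Set CC :=
  {K | ∀ σ : List Bool, σ.length ≤ n → (σ ∈ A ↔ (K.1 ∩ cyl σ).Nonempty)}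

/-- The weight of a node `σ` of `A` in the symmetric branching process with parameter `β`. -/
noncomputable def symWeight (β : List Bool → ℝ) (A : Finset (List Bool)) (σ : List Bool) : ℝ :=
  if σ ++ [false] ∈ A ∧ σ ++ [true] ∈ A then 1 - 2 * β σ else β σ

/-- `μ` is the symmetric branching measure on `C` with parameter `β`. -/
def IsSymBranching (β : List Bool → ℝ) (μ : Measure CC) : Prop :=
  IsProbabilityMeasure μ ∧
  ∀ (n : ℕ) (A : Finset (List Bool)), FinTree n A →
    (μ (UA n A)).toReal = ∏ σ ∈ A.filter (fun σ => σ.length < n), symWeight β A σ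

/-- The weight of a node `σ` of `A` in the `(b₀,b₁)`-branching process. -/
noncomputable def asymWeight (b0 b1 : ℝ) (A : Finset (List Bool)) (σ : List Bool) : ℝ :=
  if σ ++ [false] ∈ A ∧ σ ++ [true] ∈ A then 1 - b0 - b1
  else if σ ++ [false] ∈ A then b0 else b1

/-- `μ` is the `(b₀,b₁)`-branching measure on `C`. -/
def IsBranching (b0 b1 : ℝ) (μ : Measure CC) : Prop :=
  IsProbabilityMeasure μ ∧
  ∀ (n : ℕ) (A : Finset (List Bool)), FinTree n A →
    (μ (UA n A)).toReal = ∏ σ ∈ A.filter (fun σ => σ.length < n), asymWeight b0 b1 A σ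

/-- The capacity `T(Q) = μ*({K ∈ C : K ∩ Q ≠ ∅})` associated to a measure on `C`. -/
noncomputable def cap (μ : Measure CC) (Q : Set Cantor) : ℝ :=
  (μ {K : CC | (K.1 ∩ Q).Nonempty}).toReal

/-!
`U_A` is a finite Boolean combination of the clopen sets `V(I(σ))`, whose complements are
`W(2^ℕ \ I(σ))`. Conversely, the sets `U_{T_K ∩ {0,1}^{≤ n}}` decrease in `n` to a neighbourhood
base at `K`: a condition `K ∩ U ≠ ∅` is witnessed by a single cylinder inside `U`, and a condition
`K ⊆ U` by a depth `n` at which, by compactness of `K`, every depth-`n` cylinder meeting `K` lies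
in `U`.
-/

lemma isClopen_cyl (σ : List Bool) : IsClopen (cyl σ) := by
  have : cyl σ = ⋂ i : Fin σ.length, (fun x : Cantor => x i) ⁻¹' {σ.get i} := by
    ext x; simp [cyl]
  rw [this]
  exact isClopen_iInter_of_finite fun i => (isClopen_discrete _).preimage (continuous_apply _)

lemma cyl_ofFn (x : Cantor) (n : ℕ) :
    cyl (List.ofFn fun i : Fin n => x i) = PiNat.cylinder x n := by
  ext y
  simp [cyl, Fin.forall_iff]

lemma cyl_anti_of_isPrefix {σ τ : List Bool} (h : σ <+: τ) : cyl τ ⊆ cyl σ := by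
  obtain ⟨ρ, rfl⟩ := h
  intro x hx i
  simpa [List.getElem_append_left i.2] using hx ⟨i, by simp; omega⟩

lemma mem_cyl_append_singleton {x : Cantor} {σ : List Bool} (hx : x ∈ cyl σ) :
    x ∈ cyl (σ ++ [x σ.length]) := by
  rintro ⟨i, hi⟩
  simp only [List.length_append, List.length_singleton] at hi
  rcases Nat.lt_or_ge i σ.length with h | h
  · simpa [List.getElem_append_left h] using hx ⟨i, h⟩
  · obtain rfl : i = σ.length := by omega
    simp

lemma IsOpen.exists_cylinder_subset {U : Set Cantor} (hU : IsOpen U) {x : Cantor} (hx : x ∈ U) :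
    ∃ n, PiNat.cylinder x n ⊆ U := by
  obtain ⟨_, ⟨y, n, rfl⟩, hxy, hyU⟩ :=
    (PiNat.isTopologicalBasis_cylinders fun _ => Bool).exists_subset_of_mem_open hx hU
  exact ⟨n, PiNat.mem_cylinder_iff_eq.mp hxy ▸ hyU⟩

lemma IsCompact.exists_cylinder_subset {K U : Set Cantor} (hK : IsCompact K) (hU : IsOpen U)
    (hKU : K ⊆ U) : ∃ n, ∀ z ∈ K, PiNat.cylinder z n ⊆ U := by
  have hopen : ∀ n, IsOpen {z : Cantor | PiNat.cylinder z n ⊆ U} := fun n =>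
    isOpen_iff_forall_mem_open.mpr fun z hz =>
      ⟨PiNat.cylinder z n, fun w hw => show _ ⊆ U by rwa [PiNat.mem_cylinder_iff_eq.mp hw],
        PiNat.isOpen_cylinder _ z n, PiNat.self_mem_cylinder z n⟩
  have hmono : Directed (· ⊆ ·) fun n => {z : Cantor | PiNat.cylinder z n ⊆ U} :=
    Monotone.directed_le fun m n hmn z hz => (PiNat.cylinder_anti z hmn).trans hz
  obtain ⟨n, hn⟩ := hK.elim_directed_cover _ hopen
    (fun z hz => mem_iUnion.mpr (hU.exists_cylinder_subset (hKU hz))) hmono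
  exact ⟨n, hn⟩

lemma isClopen_hitting {Q : Set Cantor} (hQ : IsClopen Q) :
    IsClopen {K : CC | (K.1 ∩ Q).Nonempty} := by
  refine ⟨?_, TopologicalSpace.isOpen_generateFrom_of_mem (Or.inl ⟨Q, hQ.isOpen, rfl⟩)⟩
  have : {K : CC | (K.1 ∩ Q).Nonempty}ᶜ = {K : CC | K.1 ⊆ Qᶜ} := by
    ext K
    simp [Set.not_nonempty_iff_eq_empty, ← Set.disjoint_iff_inter_eq_empty,
      Set.subset_compl_iff_disjoint_right]
  rw [← isOpen_compl_iff, this]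
  exact TopologicalSpace.isOpen_generateFrom_of_mem (Or.inr ⟨Qᶜ, hQ.isClosed.isOpen_compl, rfl⟩)

lemma isClopen_UA (n : ℕ) (A : Finset (List Bool)) : IsClopen (UA n A) := by
  have hUA : UA n A = ⋂ σ ∈ {σ : List Bool | σ.length ≤ n},
      {K : CC | σ ∈ A ↔ (K.1 ∩ cyl σ).Nonempty} := by
    ext K; simp [UA]
  rw [hUA]
  refine (List.finite_length_le Bool n).isClopen_biInter fun σ _ => ?_
  by_cases hσ : σ ∈ A
  · simpa [hσ] using isClopen_hitting (isClopen_cyl σ)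
  · simpa [hσ, compl_ofPred] using (isClopen_hitting (isClopen_cyl σ)).compl

/-- The trace `T_K ∩ {0,1}^{≤ n}` of `K` up to height `n`. -/
noncomputable def traceTree (K : CC) (n : ℕ) : Finset (List Bool) :=
  ((List.finite_length_le Bool n).subset
    (Set.sep_subset _ fun σ => (K.1 ∩ cyl σ).Nonempty)).toFinset

lemma mem_traceTree {K : CC} {n : ℕ} {σ : List Bool} :
    σ ∈ traceTree K n ↔ σ.length ≤ n ∧ (K.1 ∩ cyl σ).Nonempty := by
  simp [traceTree]

lemma finTree_traceTree (K : CC) (n : ℕ) : FinTree n (traceTree K n) := by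
  refine ⟨⟨[], mem_traceTree.mpr ⟨n.zero_le, ?_⟩⟩, fun σ hσ => (mem_traceTree.mp hσ).1, ?_, ?_⟩
  · obtain ⟨x, hx⟩ := K.2.1
    exact ⟨x, hx, fun i => i.elim0⟩
  · intro σ τ hστ hτ
    rw [mem_traceTree] at hτ ⊢
    exact ⟨hστ.length_le.trans hτ.1,
      hτ.2.mono (inter_subset_inter_right _ (cyl_anti_of_isPrefix hστ))⟩
  · intro σ hσ hlen
    obtain ⟨x, hxK, hxσ⟩ := (mem_traceTree.mp hσ).2
    have hmem : σ ++ [x σ.length] ∈ traceTree K n :=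
      mem_traceTree.mpr ⟨by simpa using hlen, x, hxK, mem_cyl_append_singleton hxσ⟩
    generalize x σ.length = b at hmem
    cases b
    exacts [.inl hmem, .inr hmem]

lemma mem_UA_traceTree_iff {K K' : CC} {n : ℕ} :
    K' ∈ UA n (traceTree K n) ↔
      ∀ σ : List Bool, σ.length ≤ n → ((K.1 ∩ cyl σ).Nonempty ↔ (K'.1 ∩ cyl σ).Nonempty) := by
  simp +contextual [UA, mem_traceTree]

lemma mem_UA_traceTree (K : CC) (n : ℕ) : K ∈ UA n (traceTree K n) :=
  mem_UA_traceTree_iff.mpr fun _ _ => Iff.rfl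

lemma antitone_UA_traceTree (K : CC) : Antitone fun n => UA n (traceTree K n) :=
  fun _ _ hmn _ hK' => mem_UA_traceTree_iff.mpr fun σ hσ =>
    mem_UA_traceTree_iff.mp hK' σ (hσ.trans hmn)

lemma inter_cylinder_nonempty_iff_of_mem_UA_traceTree {K K' : CC} {n : ℕ}
    (hK' : K' ∈ UA n (traceTree K n)) (x : Cantor) :
    (K.1 ∩ PiNat.cylinder x n).Nonempty ↔ (K'.1 ∩ PiNat.cylinder x n).Nonempty := by
  simpa [cyl_ofFn] using mem_UA_traceTree_iff.mp hK' (List.ofFn fun i : Fin n => x i) (by simp)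

lemma exists_UA_traceTree_subset_hitting {K : CC} {U : Set Cantor} (hU : IsOpen U)
    (hKU : (K.1 ∩ U).Nonempty) : ∃ n, UA n (traceTree K n) ⊆ {K' : CC | (K'.1 ∩ U).Nonempty} := by
  obtain ⟨x, hxK, hxU⟩ := hKU
  obtain ⟨n, hn⟩ := hU.exists_cylinder_subset hxU
  refine ⟨n, fun K' hK' => ?_⟩
  have := (inter_cylinder_nonempty_iff_of_mem_UA_traceTree hK' x).mp
    ⟨x, hxK, PiNat.self_mem_cylinder x n⟩
  exact this.mono (inter_subset_inter_right _ hn)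

lemma exists_UA_traceTree_subset_missing {K : CC} {U : Set Cantor} (hU : IsOpen U)
    (hKU : K.1 ⊆ U) : ∃ n, UA n (traceTree K n) ⊆ {K' : CC | K'.1 ⊆ U} := by
  obtain ⟨n, hn⟩ := K.2.2.isCompact.exists_cylinder_subset hU hKU
  refine ⟨n, fun K' hK' y hy => ?_⟩
  obtain ⟨z, hzK, hzy⟩ := (inter_cylinder_nonempty_iff_of_mem_UA_traceTree hK' y).mpr
    ⟨y, hy, PiNat.self_mem_cylinder y n⟩
  exact hn z hzK ((PiNat.mem_cylinder_comm y z n).mp hzy)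

lemma nhds_eq_iInf_UA_traceTree (K : CC) : 𝓝 K = ⨅ n, 𝓟 (UA n (traceTree K n)) := by
  refine le_antisymm (le_iInf fun n => le_principal_iff.mpr
    ((isClopen_UA n _).isOpen.mem_nhds (mem_UA_traceTree K n))) ?_
  rw [TopologicalSpace.nhds_generateFrom]
  refine le_iInf₂ fun S ⟨hKS, hS⟩ => ?_
  obtain ⟨n, hn⟩ : ∃ n, UA n (traceTree K n) ⊆ S := by
    rcases hS with ⟨U, hU, rfl⟩ | ⟨U, hU, rfl⟩
    · exact exists_UA_traceTree_subset_hitting hU hKS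
    · exact exists_UA_traceTree_subset_missing hU hKS
  exact iInf_le_of_le n (principal_mono.mpr hn)

/-- each `U_A` is clopen in the hit-or-miss topology, and the family of all
`U_A` (for `A` a finite tree of height `n` without dead ends) is a basis for it. -/
theorem stmt_12 :
    (∀ (n : ℕ) (A : Finset (List Bool)), FinTree n A → IsClopen (UA n A)) ∧
    TopologicalSpace.IsTopologicalBasis
      {S : Set CC | ∃ (n : ℕ) (A : Finset (List Bool)), FinTree n A ∧ S = UA n A} := by
  refine ⟨fun n A _ => isClopen_UA n A, ?_⟩
  refine TopologicalSpace.isTopologicalBasis_of_isOpen_of_nhds ?_ fun K S hKS hS => ?_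
  · rintro S ⟨n, A, -, rfl⟩
    exact (isClopen_UA n A).isOpen
  have hbasis := hasBasis_iInf_principal (antitone_UA_traceTree K).directed_ge
  obtain ⟨n, -, hn⟩ := hbasis.mem_iff.mp (nhds_eq_iInf_UA_traceTree K ▸ hS.mem_nhds hKS)
  exact ⟨_, ⟨n, _, finTree_traceTree K n, rfl⟩, mem_UA_traceTree K n, hn⟩
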